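/- A labeled relation web is isomorphic (as a labeled mixed graph) to the translation ⟦F⟧ of some formula F if and only if it is modal. -/

import Mathlib

/-! # Formulas of multiplicative exponential linear logic with the placeholder `∘` -/

inductive Formula where
  | atom  : ℕ → Formula
  | natom : ℕ → Formula
  | parr  : Formula → Formula → Formula
  | tens  : Formula → Formula → Formula
  | bang  : Formula → Formula
  | quest : Formula → Formula
  | bot   : Formula
  | one   : Formula
  | hole  : Formula
  deriving DecidableEq

namespace Formula

/-- A MELL-formula: a formula with no occurrence of the placeholder `∘`. -/
def isMELL : Formula → Prop
  | atom _   => True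
  | natom _  => True
  | parr A B => isMELL A ∧ isMELL B
  | tens A B => isMELL A ∧ isMELL B
  | bang A   => isMELL A
  | quest A  => isMELL A
  | bot      => True
  | one      => True
  | hole     => False

/-- A formula without modalities (no `!` and no `?`). -/
def noMod : Formula → Prop
  | atom _   => True
  | natom _  => True
  | parr A B => noMod A ∧ noMod B
  | tens A B => noMod A ∧ noMod B
  | bang _   => False
  | quest _  => False
  | bot      => True
  | one      => True
  | hole     => True

/-- A formula of multiplicative linear logic with units:
built from atoms, dual atoms, `⊗`, `⅋`, `1`, `⊥`; no `∘`, `!`, `?`. -/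
def isMLLu : Formula → Prop
  | atom _   => True
  | natom _  => True
  | parr A B => isMLLu A ∧ isMLLu B
  | tens A B => isMLLu A ∧ isMLLu B
  | bang _   => False
  | quest _  => False
  | bot      => True
  | one      => True
  | hole     => False

/-- Linear negation, defined through the De Morgan laws. -/
def dual : Formula → Formula
  | atom a   => natom a
  | natom a  => atom a
  | parr A B => tens (dual A) (dual B)
  | tens A B => parr (dual A) (dual B)
  | bang A   => quest (dual A)
  | quest A  => bang (dual A)
  | bot      => one
  | one      => bot
  | hole     => hole

/-- `questN n F` is `?ⁿ F`. -/
def questN : ℕ → Formula → Formula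
  | 0,     A => A
  | n + 1, A => quest (questN n A)

/-- A weaken-contradiction: a formula `?ⁿ(A ⊗ Ā)` with `A` a MELL-formula. -/
def isWeakenContradiction (C : Formula) : Prop :=
  ∃ (n : ℕ) (A : Formula), A.isMELL ∧ C = questN n (tens A (dual A))

end Formula

/-- A sequent is a (non-empty) multiset of formulas. -/
abbrev Sequent := Multiset Formula

/-! ## Sequent systems -/

/-- The system MLL = {ax, ⊗, ⅋} (it coincides with the linear system MLLˡ). -/
inductive ProvMLL : Sequent → Prop
  | ax (a : ℕ) : ProvMLL {Formula.atom a, Formula.natom a}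
  | parr (Γ : Sequent) (A B : Formula) :
      ProvMLL (A ::ₘ B ::ₘ Γ) → ProvMLL (Formula.parr A B ::ₘ Γ)
  | tens (Γ Δ : Sequent) (A B : Formula) :
      ProvMLL (A ::ₘ Γ) → ProvMLL (B ::ₘ Δ) →
      ProvMLL (Formula.tens A B ::ₘ (Γ + Δ))

/-- The system MLLu = {ax, ⊗, ⅋, ⊥, 1}. -/
inductive ProvMLLu : Sequent → Prop
  | ax (a : ℕ) : ProvMLLu {Formula.atom a, Formula.natom a}
  | parr (Γ : Sequent) (A B : Formula) :
      ProvMLLu (A ::ₘ B ::ₘ Γ) → ProvMLLu (Formula.parr A B ::ₘ Γ)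
  | tens (Γ Δ : Sequent) (A B : Formula) :
      ProvMLLu (A ::ₘ Γ) → ProvMLLu (B ::ₘ Δ) →
      ProvMLLu (Formula.tens A B ::ₘ (Γ + Δ))
  | bot (Γ : Sequent) : ProvMLLu Γ → ProvMLLu (Formula.bot ::ₘ Γ)
  | one : ProvMLLu {Formula.one}

/-- The system MELL = {ax, ⊗, ⅋, ⊥, 1, !p, der, w?, c?}. -/
inductive ProvMELL : Sequent → Prop
  | ax (a : ℕ) : ProvMELL {Formula.atom a, Formula.natom a}
  | parr (Γ : Sequent) (A B : Formula) :
      ProvMELL (A ::ₘ B ::ₘ Γ) → ProvMELL (Formula.parr A B ::ₘ Γ)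
  | tens (Γ Δ : Sequent) (A B : Formula) :
      ProvMELL (A ::ₘ Γ) → ProvMELL (B ::ₘ Δ) →
      ProvMELL (Formula.tens A B ::ₘ (Γ + Δ))
  | bot (Γ : Sequent) : ProvMELL Γ → ProvMELL (Formula.bot ::ₘ Γ)
  | one : ProvMELL {Formula.one}
  | prom (Γ : Sequent) (A : Formula) :
      ProvMELL (A ::ₘ Γ.map Formula.quest) →
      ProvMELL (Formula.bang A ::ₘ Γ.map Formula.quest)
  | der (Γ : Sequent) (A : Formula) :
      ProvMELL (A ::ₘ Γ) → ProvMELL (Formula.quest A ::ₘ Γ)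
  | weak (Γ : Sequent) (A : Formula) :
      ProvMELL Γ → ProvMELL (Formula.quest A ::ₘ Γ)
  | contr (Γ : Sequent) (A : Formula) :
      ProvMELL (Formula.quest A ::ₘ Formula.quest A ::ₘ Γ) →
      ProvMELL (Formula.quest A ::ₘ Γ)

/-- The system MLLu^j = {ax_j, 1_j, ⊥^j, ⅋, ⊗}. -/
inductive ProvMLLuj : Sequent → Prop
  | axj (a n : ℕ) :
      ProvMLLuj (Formula.atom a ::ₘ Formula.natom a ::ₘ Multiset.replicate n Formula.hole)
  | onej (n : ℕ) : ProvMLLuj (Formula.one ::ₘ Multiset.replicate n Formula.hole)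
  | botj (Γ : Sequent) :
      ProvMLLuj (Formula.hole ::ₘ Γ) → ProvMLLuj (Formula.bot ::ₘ Γ)
  | parr (Γ : Sequent) (A B : Formula) :
      ProvMLLuj (A ::ₘ B ::ₘ Γ) → ProvMLLuj (Formula.parr A B ::ₘ Γ)
  | tens (Γ Δ : Sequent) (A B : Formula) :
      ProvMLLuj (A ::ₘ Γ) → ProvMLLuj (B ::ₘ Δ) →
      ProvMLLuj (Formula.tens A B ::ₘ (Γ + Δ))

/-- The system MELL^j = {ax_j, 1_j, ⊥^j, w^j, ⅋, ⊗, w!p, der, dig?, dig∘, c?}. -/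
inductive ProvMELLj : Sequent → Prop
  | axj (a n : ℕ) :
      ProvMELLj (Formula.atom a ::ₘ Formula.natom a ::ₘ Multiset.replicate n Formula.hole)
  | onej (n : ℕ) : ProvMELLj (Formula.one ::ₘ Multiset.replicate n Formula.hole)
  | botj (Γ : Sequent) :
      ProvMELLj (Formula.hole ::ₘ Γ) → ProvMELLj (Formula.bot ::ₘ Γ)
  | wj (Γ : Sequent) (A : Formula) :
      ProvMELLj (Formula.hole ::ₘ Γ) → ProvMELLj (Formula.quest A ::ₘ Γ)
  | parr (Γ : Sequent) (A B : Formula) :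
      ProvMELLj (A ::ₘ B ::ₘ Γ) → ProvMELLj (Formula.parr A B ::ₘ Γ)
  | tens (Γ Δ : Sequent) (A B : Formula) :
      ProvMELLj (A ::ₘ Γ) → ProvMELLj (B ::ₘ Δ) →
      ProvMELLj (Formula.tens A B ::ₘ (Γ + Δ))
  | wprom (Γ : Sequent) (A : Formula) :
      ProvMELLj (A ::ₘ Γ) → ProvMELLj (Formula.bang A ::ₘ Γ.map Formula.quest)
  | der (Γ : Sequent) (A : Formula) :
      ProvMELLj (A ::ₘ Γ) → ProvMELLj (Formula.quest A ::ₘ Γ)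
  | dig (Γ : Sequent) (A : Formula) :
      ProvMELLj (Formula.quest (Formula.quest A) ::ₘ Γ) →
      ProvMELLj (Formula.quest A ::ₘ Γ)
  | digo (Γ : Sequent) :
      ProvMELLj (Formula.quest Formula.hole ::ₘ Γ) → ProvMELLj (Formula.hole ::ₘ Γ)
  | contr (Γ : Sequent) (A : Formula) :
      ProvMELLj (Formula.quest A ::ₘ Formula.quest A ::ₘ Γ) →
      ProvMELLj (Formula.quest A ::ₘ Γ)

/-- The system MELL^j extended with the cut rule (cut formulas are MELL-formulas). -/
inductive ProvMELLjCut : Sequent → Prop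
  | axj (a n : ℕ) :
      ProvMELLjCut (Formula.atom a ::ₘ Formula.natom a ::ₘ Multiset.replicate n Formula.hole)
  | onej (n : ℕ) : ProvMELLjCut (Formula.one ::ₘ Multiset.replicate n Formula.hole)
  | botj (Γ : Sequent) :
      ProvMELLjCut (Formula.hole ::ₘ Γ) → ProvMELLjCut (Formula.bot ::ₘ Γ)
  | wj (Γ : Sequent) (A : Formula) :
      ProvMELLjCut (Formula.hole ::ₘ Γ) → ProvMELLjCut (Formula.quest A ::ₘ Γ)
  | parr (Γ : Sequent) (A B : Formula) :
      ProvMELLjCut (A ::ₘ B ::ₘ Γ) → ProvMELLjCut (Formula.parr A B ::ₘ Γ)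
  | tens (Γ Δ : Sequent) (A B : Formula) :
      ProvMELLjCut (A ::ₘ Γ) → ProvMELLjCut (B ::ₘ Δ) →
      ProvMELLjCut (Formula.tens A B ::ₘ (Γ + Δ))
  | wprom (Γ : Sequent) (A : Formula) :
      ProvMELLjCut (A ::ₘ Γ) → ProvMELLjCut (Formula.bang A ::ₘ Γ.map Formula.quest)
  | der (Γ : Sequent) (A : Formula) :
      ProvMELLjCut (A ::ₘ Γ) → ProvMELLjCut (Formula.quest A ::ₘ Γ)
  | dig (Γ : Sequent) (A : Formula) :
      ProvMELLjCut (Formula.quest (Formula.quest A) ::ₘ Γ) →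
      ProvMELLjCut (Formula.quest A ::ₘ Γ)
  | digo (Γ : Sequent) :
      ProvMELLjCut (Formula.quest Formula.hole ::ₘ Γ) → ProvMELLjCut (Formula.hole ::ₘ Γ)
  | contr (Γ : Sequent) (A : Formula) :
      ProvMELLjCut (Formula.quest A ::ₘ Formula.quest A ::ₘ Γ) →
      ProvMELLjCut (Formula.quest A ::ₘ Γ)
  | cut (Γ Δ : Sequent) (A : Formula) :
      A.isMELL → ProvMELLjCut (A ::ₘ Γ) → ProvMELLjCut (A.dual ::ₘ Δ) →
      ProvMELLjCut (Γ + Δ)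

/-- The linear system MLLu^ℓ = {ax_j, 1_j, ⅋, ⊗}. -/
inductive ProvMLLuLin : Sequent → Prop
  | axj (a n : ℕ) :
      ProvMLLuLin (Formula.atom a ::ₘ Formula.natom a ::ₘ Multiset.replicate n Formula.hole)
  | onej (n : ℕ) : ProvMLLuLin (Formula.one ::ₘ Multiset.replicate n Formula.hole)
  | parr (Γ : Sequent) (A B : Formula) :
      ProvMLLuLin (A ::ₘ B ::ₘ Γ) → ProvMLLuLin (Formula.parr A B ::ₘ Γ)
  | tens (Γ Δ : Sequent) (A B : Formula) :
      ProvMLLuLin (A ::ₘ Γ) → ProvMLLuLin (B ::ₘ Δ) →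
      ProvMLLuLin (Formula.tens A B ::ₘ (Γ + Δ))

/-- The linear system MELL^ℓ = {ax_j, 1_j, ⅋, ⊗, w!p}. -/
inductive ProvMELLLin : Sequent → Prop
  | axj (a n : ℕ) :
      ProvMELLLin (Formula.atom a ::ₘ Formula.natom a ::ₘ Multiset.replicate n Formula.hole)
  | onej (n : ℕ) : ProvMELLLin (Formula.one ::ₘ Multiset.replicate n Formula.hole)
  | parr (Γ : Sequent) (A B : Formula) :
      ProvMELLLin (A ::ₘ B ::ₘ Γ) → ProvMELLLin (Formula.parr A B ::ₘ Γ)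
  | tens (Γ Δ : Sequent) (A B : Formula) :
      ProvMELLLin (A ::ₘ Γ) → ProvMELLLin (B ::ₘ Δ) →
      ProvMELLLin (Formula.tens A B ::ₘ (Γ + Δ))
  | wprom (Γ : Sequent) (A : Formula) :
      ProvMELLLin (A ::ₘ Γ) → ProvMELLLin (Formula.bang A ::ₘ Γ.map Formula.quest)

/-- MELL with the cut rule, recording the list of active cut formulas of the derivation. -/
inductive ProvMELLCutL : Sequent → List Formula → Prop
  | ax (a : ℕ) : ProvMELLCutL {Formula.atom a, Formula.natom a} []
  | parr (Γ : Sequent) (A B : Formula) (L : List Formula) :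
      ProvMELLCutL (A ::ₘ B ::ₘ Γ) L → ProvMELLCutL (Formula.parr A B ::ₘ Γ) L
  | tens (Γ Δ : Sequent) (A B : Formula) (L₁ L₂ : List Formula) :
      ProvMELLCutL (A ::ₘ Γ) L₁ → ProvMELLCutL (B ::ₘ Δ) L₂ →
      ProvMELLCutL (Formula.tens A B ::ₘ (Γ + Δ)) (L₁ ++ L₂)
  | bot (Γ : Sequent) (L : List Formula) :
      ProvMELLCutL Γ L → ProvMELLCutL (Formula.bot ::ₘ Γ) L
  | one : ProvMELLCutL {Formula.one} []
  | prom (Γ : Sequent) (A : Formula) (L : List Formula) :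
      ProvMELLCutL (A ::ₘ Γ.map Formula.quest) L →
      ProvMELLCutL (Formula.bang A ::ₘ Γ.map Formula.quest) L
  | der (Γ : Sequent) (A : Formula) (L : List Formula) :
      ProvMELLCutL (A ::ₘ Γ) L → ProvMELLCutL (Formula.quest A ::ₘ Γ) L
  | weak (Γ : Sequent) (A : Formula) (L : List Formula) :
      ProvMELLCutL Γ L → ProvMELLCutL (Formula.quest A ::ₘ Γ) L
  | contr (Γ : Sequent) (A : Formula) (L : List Formula) :
      ProvMELLCutL (Formula.quest A ::ₘ Formula.quest A ::ₘ Γ) L →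
      ProvMELLCutL (Formula.quest A ::ₘ Γ) L
  | cut (Γ Δ : Sequent) (A : Formula) (L₁ L₂ : List Formula) :
      A.isMELL → ProvMELLCutL (A ::ₘ Γ) L₁ → ProvMELLCutL (A.dual ::ₘ Δ) L₂ →
      ProvMELLCutL (Γ + Δ) (A :: (L₁ ++ L₂))

/-! ## Deep inference rewriting -/

/-- Closure of a rewrite relation under arbitrary formula contexts. -/
inductive Deep (r : Formula → Formula → Prop) : Formula → Formula → Prop
  | base {A B : Formula} : r A B → Deep r A B
  | parrL {A A' : Formula} (B : Formula) :
      Deep r A A' → Deep r (Formula.parr A B) (Formula.parr A' B)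
  | parrR (A : Formula) {B B' : Formula} :
      Deep r B B' → Deep r (Formula.parr A B) (Formula.parr A B')
  | tensL {A A' : Formula} (B : Formula) :
      Deep r A A' → Deep r (Formula.tens A B) (Formula.tens A' B)
  | tensR (A : Formula) {B B' : Formula} :
      Deep r B B' → Deep r (Formula.tens A B) (Formula.tens A B')
  | bang {A A' : Formula} : Deep r A A' → Deep r (Formula.bang A) (Formula.bang A')
  | quest {A A' : Formula} : Deep r A A' → Deep r (Formula.quest A) (Formula.quest A')

/-- Base steps of all the deep-MELL rules:
deep dereliction, deep digging, deep ∘-digging, deep ⊥, deep weakening, deep contraction. -/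
inductive DeepMELLBase : Formula → Formula → Prop
  | der (A : Formula) : DeepMELLBase A (Formula.quest A)
  | dig (A : Formula) :
      DeepMELLBase (Formula.quest (Formula.quest A)) (Formula.quest A)
  | digHole : DeepMELLBase (Formula.quest Formula.hole) Formula.hole
  | bot : DeepMELLBase Formula.hole Formula.bot
  | weak (A : Formula) : DeepMELLBase Formula.hole (Formula.quest A)
  | contr (A : Formula) :
      DeepMELLBase (Formula.parr (Formula.quest A) (Formula.quest A)) (Formula.quest A)

/-- Base steps of deep dereliction, deep digging and deep ∘-digging. -/
inductive DigBase : Formula → Formula → Prop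
  | der (A : Formula) : DigBase A (Formula.quest A)
  | dig (A : Formula) : DigBase (Formula.quest (Formula.quest A)) (Formula.quest A)
  | digHole : DigBase (Formula.quest Formula.hole) Formula.hole

/-- Base steps of deep weakening and deep ⊥. -/
inductive WeakBase : Formula → Formula → Prop
  | bot : WeakBase Formula.hole Formula.bot
  | weak (A : Formula) : WeakBase Formula.hole (Formula.quest A)

/-- Base step of deep contraction. -/
inductive ContrBase : Formula → Formula → Prop
  | contr (A : Formula) :
      ContrBase (Formula.parr (Formula.quest A) (Formula.quest A)) (Formula.quest A)

/-- Base steps of deep ⊥, deep weakening, deep ?-contraction, deep ∘-contraction,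
and the deep associativity-commutativity rules. -/
inductive WCACBase : Formula → Formula → Prop
  | bot : WCACBase Formula.hole Formula.bot
  | weak (A : Formula) : WCACBase Formula.hole (Formula.quest A)
  | contr (A : Formula) :
      WCACBase (Formula.parr (Formula.quest A) (Formula.quest A)) (Formula.quest A)
  | contrHole :
      WCACBase (Formula.parr Formula.hole Formula.hole) Formula.hole
  | tensAssoc (A B C : Formula) :
      WCACBase (Formula.tens (Formula.tens A B) C) (Formula.tens A (Formula.tens B C))
  | parrAssoc (A B C : Formula) :
      WCACBase (Formula.parr (Formula.parr A B) C) (Formula.parr A (Formula.parr B C))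
  | tensComm (A B : Formula) : WCACBase (Formula.tens A B) (Formula.tens B A)
  | parrComm (A B : Formula) : WCACBase (Formula.parr A B) (Formula.parr B A)

/-- One deep rewriting step inside a sequent: rewrite one member of the multiset. -/
def SeqStep (r : Formula → Formula → Prop) (Γ Γ' : Sequent) : Prop :=
  ∃ (A A' : Formula) (Δ : Sequent), Deep r A A' ∧ Γ = A ::ₘ Δ ∧ Γ' = A' ::ₘ Δ

/-- Derivability between sequents by a finite sequence of deep rewriting steps. -/
def SeqDeriv (r : Formula → Formula → Prop) : Sequent → Sequent → Prop :=
  Relation.ReflTransGen (SeqStep r)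

/-- Derivability between formulas by a finite sequence of deep rewriting steps. -/
def FormDeriv (r : Formula → Formula → Prop) : Formula → Formula → Prop :=
  Relation.ReflTransGen (Deep r)

/-- Equivalence of formulas modulo associativity and commutativity of ⊗ and ⅋. -/
inductive ACEq : Formula → Formula → Prop
  | refl (A : Formula) : ACEq A A
  | symm {A B : Formula} : ACEq A B → ACEq B A
  | trans {A B C : Formula} : ACEq A B → ACEq B C → ACEq A C
  | tensAssoc (A B C : Formula) :
      ACEq (Formula.tens (Formula.tens A B) C) (Formula.tens A (Formula.tens B C))
  | parrAssoc (A B C : Formula) :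
      ACEq (Formula.parr (Formula.parr A B) C) (Formula.parr A (Formula.parr B C))
  | tensComm (A B : Formula) : ACEq (Formula.tens A B) (Formula.tens B A)
  | parrComm (A B : Formula) : ACEq (Formula.parr A B) (Formula.parr B A)
  | tensCongr {A A' B B' : Formula} :
      ACEq A A' → ACEq B B' → ACEq (Formula.tens A B) (Formula.tens A' B')
  | parrCongr {A A' B B' : Formula} :
      ACEq A A' → ACEq B B' → ACEq (Formula.parr A B) (Formula.parr A' B')
  | bangCongr {A A' : Formula} : ACEq A A' → ACEq (Formula.bang A) (Formula.bang A')
  | questCongr {A A' : Formula} : ACEq A A' → ACEq (Formula.quest A) (Formula.quest A')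

/-! ## Mixed graphs and relation webs -/

/-- A mixed graph: a finite set of vertices from `ℕ`, an undirected edge relation `R`
and a directed edge relation `lt`. -/
structure MGraph where
  verts : Finset ℕ
  R : ℕ → ℕ → Prop
  lt : ℕ → ℕ → Prop

namespace MGraph

/-- The axioms of mixed graphs: `R` symmetric and irreflexive, `lt` irreflexive,
`R ∩ lt = ∅`, and all edges between vertices. -/
def IsMixed (G : MGraph) : Prop :=
  (∀ u v, G.R u v → G.R v u) ∧
  (∀ v, ¬ G.R v v) ∧
  (∀ v, ¬ G.lt v v) ∧
  (∀ u v, ¬ (G.R u v ∧ G.lt u v)) ∧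
  (∀ u v, G.R u v → u ∈ G.verts ∧ v ∈ G.verts) ∧
  (∀ u v, G.lt u v → u ∈ G.verts ∧ v ∈ G.verts)

/-- `u` and `v` are joined by no edge at all. -/
def noEdge (G : MGraph) (u v : ℕ) : Prop :=
  ¬ G.R u v ∧ ¬ G.R v u ∧ ¬ G.lt u v ∧ ¬ G.lt v u

/-- A relation web: a non-empty mixed graph with `lt` transitive, `(V,R)` a cograph
(no induced P₄), `(V,lt)` a series-parallel order (no induced N), and no induced
3-color triangle. -/
def IsRelWeb (G : MGraph) : Prop :=
  G.IsMixed ∧ G.verts.Nonempty ∧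
  (∀ u v w, G.lt u v → G.lt v w → G.lt u w) ∧
  (¬ ∃ w x y z, w ∈ G.verts ∧ x ∈ G.verts ∧ y ∈ G.verts ∧ z ∈ G.verts ∧
      w ≠ x ∧ w ≠ y ∧ w ≠ z ∧ x ≠ y ∧ x ≠ z ∧ y ≠ z ∧
      G.R w x ∧ G.R x y ∧ G.R y z ∧ ¬ G.R w y ∧ ¬ G.R w z ∧ ¬ G.R x z) ∧
  (¬ ∃ u v y z, u ∈ G.verts ∧ v ∈ G.verts ∧ y ∈ G.verts ∧ z ∈ G.verts ∧
      u ≠ v ∧ u ≠ y ∧ u ≠ z ∧ v ≠ y ∧ v ≠ z ∧ y ≠ z ∧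
      G.lt u v ∧ G.lt y v ∧ G.lt y z ∧
      ¬ G.lt u y ∧ ¬ G.lt y u ∧ ¬ G.lt u z ∧ ¬ G.lt z u ∧ ¬ G.lt v z ∧ ¬ G.lt z v) ∧
  (¬ ∃ u w v, u ∈ G.verts ∧ w ∈ G.verts ∧ v ∈ G.verts ∧
      u ≠ w ∧ u ≠ v ∧ w ≠ v ∧
      G.noEdge u w ∧ G.R w v ∧ (G.lt u v ∨ G.lt v u))

/-- `G ⅋ H`: disjoint union. -/
def uparr (G H : MGraph) : MGraph where
  verts := G.verts ∪ H.verts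
  R := fun u v => G.R u v ∨ H.R u v
  lt := fun u v => G.lt u v ∨ H.lt u v

/-- `G ⊗ H`: disjoint union plus all undirected edges between `G` and `H`. -/
def utens (G H : MGraph) : MGraph where
  verts := G.verts ∪ H.verts
  R := fun u v => G.R u v ∨ H.R u v ∨
    (u ∈ G.verts ∧ v ∈ H.verts) ∨ (u ∈ H.verts ∧ v ∈ G.verts)
  lt := fun u v => G.lt u v ∨ H.lt u v

/-- `G ◁ H`: disjoint union plus all directed edges from `G` to `H`. -/
def useq (G H : MGraph) : MGraph where
  verts := G.verts ∪ H.verts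
  R := fun u v => G.R u v ∨ H.R u v
  lt := fun u v => G.lt u v ∨ H.lt u v ∨ (u ∈ G.verts ∧ v ∈ H.verts)

/-- Graphs constructible from single vertices using `⅋`, `◁` and `⊗`
(applied to disjoint graphs). -/
inductive Constructible : MGraph → Prop
  | single (n : ℕ) :
      Constructible ⟨{n}, fun _ _ => False, fun _ _ => False⟩
  | parr {G H : MGraph} : Constructible G → Constructible H →
      Disjoint G.verts H.verts → Constructible (uparr G H)
  | tens {G H : MGraph} : Constructible G → Constructible H →
      Disjoint G.verts H.verts → Constructible (utens G H)
  | seq {G H : MGraph} : Constructible G → Constructible H →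
      Disjoint G.verts H.verts → Constructible (useq G H)

end MGraph

/-! ## Labeled graphs and the translation of formulas -/

/-- Vertex labels: atoms, dual atoms, `!`, `?`, `1`, `⊥`, `∘`. -/
inductive GLabel where
  | atom  : ℕ → GLabel
  | natom : ℕ → GLabel
  | bang  : GLabel
  | quest : GLabel
  | one   : GLabel
  | bot   : GLabel
  | hole  : GLabel
  deriving DecidableEq

/-- Atomic labels (atoms or dual atoms). -/
def GLabel.isAtom : GLabel → Prop
  | .atom _  => True
  | .natom _ => True
  | _        => False

/-- A labeled mixed graph. -/
structure LabGraph extends MGraph where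
  lab : ℕ → GLabel

namespace LabGraph

/-- A labeled graph is a relation web when its underlying mixed graph is. -/
def IsWeb (G : LabGraph) : Prop := G.toMGraph.IsRelWeb

/-- Properly labeled: a vertex has an outgoing `lt`-edge iff its label is `!` or `?`. -/
def ProperlyLabeled (G : LabGraph) : Prop :=
  ∀ v ∈ G.verts, (∃ w, G.lt v w) ↔ (G.lab v = GLabel.bang ∨ G.lab v = GLabel.quest)

/-- Modal: properly labeled, and vertices with `lt`-edges to a common target are
`lt`-comparable. -/
def IsModalLab (G : LabGraph) : Prop :=
  G.ProperlyLabeled ∧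
  ∀ u v w, u ∈ G.verts → v ∈ G.verts → w ∈ G.verts →
    G.lt u w → G.lt v w → u ≠ v → (G.lt u v ∨ G.lt v u)

/-- A (labeled) modal relation web. -/
def IsModalWeb (G : LabGraph) : Prop := G.IsWeb ∧ G.IsModalLab

/-- The single-vertex labeled graph. -/
def point (l : GLabel) : LabGraph where
  verts := {0}
  R := fun _ _ => False
  lt := fun _ _ => False
  lab := fun _ => l

/-- `G ⅋ H` on labeled graphs, with vertices renamed evenly/oddly so as to be disjoint. -/
def gparr (G H : LabGraph) : LabGraph where
  verts := G.verts.image (fun n => 2 * n) ∪ H.verts.image (fun n => 2 * n + 1)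
  R := fun u v =>
    (u % 2 = 0 ∧ v % 2 = 0 ∧ G.R (u / 2) (v / 2)) ∨
    (u % 2 = 1 ∧ v % 2 = 1 ∧ H.R (u / 2) (v / 2))
  lt := fun u v =>
    (u % 2 = 0 ∧ v % 2 = 0 ∧ G.lt (u / 2) (v / 2)) ∨
    (u % 2 = 1 ∧ v % 2 = 1 ∧ H.lt (u / 2) (v / 2))
  lab := fun n => if n % 2 = 0 then G.lab (n / 2) else H.lab (n / 2)

/-- `G ⊗ H` on labeled graphs. -/
def gtens (G H : LabGraph) : LabGraph where
  verts := (gparr G H).verts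
  R := fun u v => (gparr G H).R u v ∨
    (u % 2 = 0 ∧ v % 2 = 1 ∧ u / 2 ∈ G.verts ∧ v / 2 ∈ H.verts) ∨
    (u % 2 = 1 ∧ v % 2 = 0 ∧ u / 2 ∈ H.verts ∧ v / 2 ∈ G.verts)
  lt := (gparr G H).lt
  lab := (gparr G H).lab

/-- `G ◁ H` on labeled graphs. -/
def gseq (G H : LabGraph) : LabGraph where
  verts := (gparr G H).verts
  R := (gparr G H).R
  lt := fun u v => (gparr G H).lt u v ∨
    (u % 2 = 0 ∧ v % 2 = 1 ∧ u / 2 ∈ G.verts ∧ v / 2 ∈ H.verts)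
  lab := (gparr G H).lab

/-- The translation `⟦·⟧` of formulas into labeled graphs. -/
def trans : Formula → LabGraph
  | .atom a  => point (.atom a)
  | .natom a => point (.natom a)
  | .one     => point .one
  | .bot     => point .bot
  | .hole    => point .hole
  | .parr A B => gparr (trans A) (trans B)
  | .tens A B => gtens (trans A) (trans B)
  | .bang A  => gseq (point .bang) (trans A)
  | .quest A => gseq (point .quest) (trans A)

/-- The translation of a sequent (represented as a non-empty list): `⅋` of the members. -/
def transSeq : List Formula → LabGraph
  | [] => point .hole
  | [A] => trans A
  | A :: B :: Γ => gparr (trans A) (transSeq (B :: Γ))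

/-- Isomorphism of labeled mixed graphs. -/
def Iso (G H : LabGraph) : Prop :=
  ∃ f : ℕ → ℕ, Set.BijOn f ↑G.verts ↑H.verts ∧
    (∀ u ∈ G.verts, ∀ v ∈ G.verts,
      (G.R u v ↔ H.R (f u) (f v)) ∧ (G.lt u v ↔ H.lt (f u) (f v))) ∧
    (∀ v ∈ G.verts, H.lab (f v) = G.lab v)

end LabGraph

/-! ## RGB-cographs -/

/-- An RGB-cograph: a labeled graph together with a linking relation. -/
structure RGB extends LabGraph where
  link : ℕ → ℕ → Prop

namespace RGB

/-- The conditions for being an RGB-cograph. -/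
def IsRGB (G : RGB) : Prop :=
  G.toLabGraph.IsModalWeb ∧
  (∀ v ∈ G.verts, G.link v v) ∧
  (∀ u v, G.link u v → G.link v u) ∧
  (∀ u v w, G.link u v → G.link v w → G.link u w) ∧
  (∀ u v, G.link u v → u ∈ G.verts ∧ v ∈ G.verts) ∧
  (∀ v ∈ G.verts, (G.lab v).isAtom →
      ∃! w, w ≠ v ∧ G.link v w ∧ (G.lab w).isAtom) ∧
  (∀ v ∈ G.verts, G.lab v = GLabel.one →
      ∀ w, G.link v w → w ≠ v → G.lab w = GLabel.hole) ∧
  (∀ v ∈ G.verts, G.lab v = GLabel.hole →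
      ∃ w, G.link v w ∧ ((G.lab w).isAtom ∨ G.lab w = GLabel.one)) ∧
  (∀ v ∈ G.verts, (G.lab v = GLabel.bang ∨ G.lab v = GLabel.quest) →
      (∃! w, G.link v w ∧ G.lab w = GLabel.bang) ∧
      (∀ w, G.link v w → G.lab w ≠ GLabel.hole))

/-- Adjacency by an `R`- or `lt`-edge (in either direction). -/
def rlAdj (G : RGB) (u v : ℕ) : Prop :=
  G.R u v ∨ G.R v u ∨ G.lt u v ∨ G.lt v u

/-- Adjacency by a linking edge. -/
def lkAdj (G : RGB) (u v : ℕ) : Prop := G.link u v ∧ u ≠ v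

/-- A single step of an alternating path; `true` = linking edge, `false` = R/lt edge. -/
def aeStep (G : RGB) : Bool → ℕ → ℕ → Prop
  | true,  u, v => G.lkAdj u v
  | false, u, v => G.rlAdj u v

/-- The edges of the list alternate, starting with an edge of kind `b`. -/
def AltChain (G : RGB) : Bool → List ℕ → Prop
  | _, [] => True
  | _, [_] => True
  | b, u :: v :: l => G.aeStep b u v ∧ AltChain G (!b) (v :: l)

/-- An æ-path: a non-empty elementary alternating path on vertices of `G`. -/
def IsAEPath (G : RGB) (l : List ℕ) : Prop :=
  l ≠ [] ∧ l.Nodup ∧ (∀ v ∈ l, v ∈ G.verts) ∧ ∃ b, G.AltChain b l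

/-- A path is chordless if no `R`/`lt` edge joins two non-consecutive vertices. -/
def Chordless (G : RGB) (l : List ℕ) : Prop :=
  ∀ (i j : ℕ) (hi : i < l.length) (hj : j < l.length), i + 2 ≤ j →
    ¬ G.rlAdj (l.get ⟨i, hi⟩) (l.get ⟨j, hj⟩)

/-- æ-connectedness: any two vertices are joined by a chordless æ-path. -/
def AEConnected (G : RGB) : Prop :=
  ∀ u ∈ G.verts, ∀ v ∈ G.verts,
    ∃ l, G.IsAEPath l ∧ G.Chordless l ∧ l.head? = some u ∧ l.getLast? = some v

/-- An æ-cycle, represented by the list of its (distinct) vertices; the closing edge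
returns to the first vertex and the number of edges is even so that alternation closes. -/
def IsAECycle (G : RGB) (l : List ℕ) : Prop :=
  2 ≤ l.length ∧ l.length % 2 = 0 ∧ l.Nodup ∧ (∀ v ∈ l, v ∈ G.verts) ∧
  ∃ b, G.AltChain b (l ++ [l.headI])

/-- Chordlessness for cycles: no `R`/`lt` edge between cyclically non-consecutive
vertices. -/
def ChordlessCyc (G : RGB) (l : List ℕ) : Prop :=
  ∀ (i j : ℕ) (hi : i < l.length) (hj : j < l.length), i + 2 ≤ j →
    ¬ (i = 0 ∧ j = l.length - 1) →
    ¬ G.rlAdj (l.get ⟨i, hi⟩) (l.get ⟨j, hj⟩)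

/-- æ-acyclicity: no chordless æ-cycle. -/
def AEAcyclic (G : RGB) : Prop :=
  ¬ ∃ l, G.IsAECycle l ∧ G.ChordlessCyc l

/-- MELL-correctness of an RGB-cograph. -/
def MELLCorrect (G : RGB) : Prop :=
  G.verts.Nonempty ∧ G.AEConnected ∧ G.AEAcyclic ∧
  (∀ w v v', G.lt w v → G.link v v' → ∃ w', G.link w' w ∧ G.lt w' v')

/-- MLL-correctness: MELL-correct and every vertex is atomic. -/
def MLLCorrect (G : RGB) : Prop :=
  G.MELLCorrect ∧ ∀ v ∈ G.verts, (G.lab v).isAtom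

/-- MLLu-correctness: MELL-correct and every vertex is atomic, `1` or `∘`. -/
def MLLuCorrect (G : RGB) : Prop :=
  G.MELLCorrect ∧
  ∀ v ∈ G.verts, (G.lab v).isAtom ∨ G.lab v = GLabel.one ∨ G.lab v = GLabel.hole

end RGB

/-! ## Fibrations -/

/-- No edge at all between `u` and `v` in the labeled graph `H`. -/
def LabGraph.noE (H : LabGraph) (u v : ℕ) : Prop := H.toMGraph.noEdge u v

/-- A linear fibration between labeled modal relation webs. -/
def IsLinearFib (G H : LabGraph) (f : ℕ → ℕ) : Prop :=
  (∀ v ∈ G.verts, f v ∈ H.verts) ∧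
  -- (1) preservation of R and lt
  (∀ u v, u ∈ G.verts → v ∈ G.verts →
    (G.R u v → H.R (f u) (f v)) ∧ (G.lt u v → H.lt (f u) (f v))) ∧
  -- (2) skew lifting
  (∀ v ∈ G.verts, ∀ w ∈ H.verts,
    (H.R w (f v) → ∃ u ∈ G.verts, G.R u v ∧ H.noE w (f u)) ∧
    (H.lt w (f v) → ∃ u ∈ G.verts, G.lt u v ∧ H.noE w (f u))) ∧
  -- (3) modality
  (∀ u v, u ∈ G.verts → v ∈ G.verts → u ≠ v → G.noE u v → H.lt (f u) (f v) →
    ∃ w ∈ G.verts, (G.lt w v ∧ f w = f u) ∨ (G.lt u w ∧ f w = f v)) ∧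
  -- (4) labels
  (∀ v ∈ G.verts,
    (G.lab v ≠ GLabel.hole → H.lab (f v) = G.lab v) ∧
    (G.lab v = GLabel.hole →
      H.lab (f v) = GLabel.hole ∨ H.lab (f v) = GLabel.bot ∨ H.lab (f v) = GLabel.quest)) ∧
  -- (5) ∘-domination
  (∀ w ∈ H.verts, (∀ v ∈ G.verts, f v ≠ w) →
    ∃ u ∈ G.verts, G.lab u = GLabel.hole ∧ H.lab (f u) = GLabel.quest ∧ H.lt (f u) w ∧
      ∀ v ∈ G.verts, (H.R (f v) (f u) ↔ H.R (f v) w) ∧ (H.lt (f v) (f u) ↔ H.lt (f v) w)) ∧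
  -- (6) ?-domination
  (∀ v₁ v₂, v₁ ∈ G.verts → v₂ ∈ G.verts → v₁ ≠ v₂ → f v₁ = f v₂ →
    ∃ w₁ w₂, w₁ ∈ G.verts ∧ w₂ ∈ G.verts ∧ w₁ ≠ w₂ ∧ f w₁ = f w₂ ∧
      H.lab (f w₁) = GLabel.quest ∧
      ((w₁ = v₁ ∧ w₂ = v₂) ∨ (G.lt w₁ v₁ ∧ G.lt w₂ v₂)))

/-- `v` and `w` are clones: every other vertex relates to them in the same way. -/
def Clones (G : LabGraph) (v w : ℕ) : Prop :=
  ∀ u ∈ G.verts, u ≠ v → u ≠ w →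
    (G.R u v ↔ G.R u w) ∧ (G.lt u v ↔ G.lt u w) ∧ (G.lt v u ↔ G.lt w u) ∧
    (G.noE u v ↔ G.noE u w)

/-- A ?-map between labeled modal relation webs. -/
def IsQMap (G H : LabGraph) (f : ℕ → ℕ) : Prop :=
  (∀ v ∈ G.verts, f v ∈ H.verts) ∧
  (∀ v w, v ∈ G.verts → w ∈ G.verts → v ≠ w → f v = f w →
    Clones G v w ∧ G.lt v w ∧ H.lab (f v) = G.lab w ∧
    (G.lab w = GLabel.quest ∨ G.lab w = GLabel.hole)) ∧
  (∀ v w, v ∈ G.verts → w ∈ G.verts → f v ≠ f w →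
    (G.R v w → H.R (f v) (f w)) ∧ (G.lt v w → H.lt (f v) (f w)) ∧
    (G.lt w v → H.lt (f w) (f v)) ∧ (G.noE v w → H.noE (f v) (f w))) ∧
  (∀ w ∈ H.verts, (∀ v ∈ G.verts, f v ≠ w) →
    H.lab w = GLabel.quest ∧ ∃ x, H.lt w x)

/-- A MELL-fibration: the composite of a ?-map followed by a linear fibration. -/
def IsMELLFib (G H : LabGraph) (f : ℕ → ℕ) : Prop :=
  ∃ (K : LabGraph) (g h : ℕ → ℕ),
    K.IsModalWeb ∧ IsQMap G K g ∧ IsLinearFib K H h ∧ ∀ v ∈ G.verts, f v = h (g v)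

/-- A MLLu-fibration: a MELL-fibration whose codomain has no `!` or `?` vertex. -/
def IsMLLuFib (G H : LabGraph) (f : ℕ → ℕ) : Prop :=
  IsMELLFib G H f ∧
  ∀ v ∈ H.verts, H.lab v ≠ GLabel.bang ∧ H.lab v ≠ GLabel.quest

/-- A MLL-fibration: a bijection whose codomain has no `!`, `?` or `∘` vertex. -/
def IsMLLFib (G H : LabGraph) (f : ℕ → ℕ) : Prop :=
  Set.BijOn f ↑G.verts ↑H.verts ∧
  ∀ v ∈ H.verts,
    H.lab v ≠ GLabel.bang ∧ H.lab v ≠ GLabel.quest ∧ H.lab v ≠ GLabel.hole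

/-- An allegiant map from an RGB-cograph to a labeled relation web. -/
def Allegiant (G : RGB) (H : LabGraph) (f : ℕ → ℕ) : Prop :=
  (∀ v w, v ∈ G.verts → w ∈ G.verts → G.link v w → v ≠ w →
    (G.lab v).isAtom → (G.lab w).isAtom →
    ∃ n : ℕ, (H.lab (f v) = GLabel.atom n ∧ H.lab (f w) = GLabel.natom n) ∨
             (H.lab (f v) = GLabel.natom n ∧ H.lab (f w) = GLabel.atom n)) ∧
  (∀ v ∈ G.verts, G.lab v ≠ GLabel.hole → H.lab (f v) = G.lab v) ∧
  (∀ v ∈ G.verts, G.lab v = GLabel.hole →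
    H.lab (f v) = GLabel.bot ∨ H.lab (f v) = GLabel.quest)

/-! ## Systems, correctness and combinatorial proofs, parametrized by X -/

inductive Sys where
  | MLL | MLLu | MELL

/-- Provability in the sequent system `X`. -/
def SysProv : Sys → Sequent → Prop
  | Sys.MLL  => ProvMLL
  | Sys.MLLu => ProvMLLu
  | Sys.MELL => ProvMELL

/-- Provability in the linear system `X^ℓ`. -/
def SysProvLin : Sys → Sequent → Prop
  | Sys.MLL  => ProvMLL
  | Sys.MLLu => ProvMLLuLin
  | Sys.MELL => ProvMELLLin

/-- The appropriate class of formulas for `X`: MELL-formulas for MELL; formulas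
without modalities for MLLu; formulas without modalities and without `∘` for MLL. -/
def SysForm : Sys → Formula → Prop
  | Sys.MLL  => fun F => F.noMod ∧ F.isMELL
  | Sys.MLLu => Formula.noMod
  | Sys.MELL => Formula.isMELL

/-- `X`-correctness of RGB-cographs. -/
def SysCorrect : Sys → RGB → Prop
  | Sys.MLL  => RGB.MLLCorrect
  | Sys.MLLu => RGB.MLLuCorrect
  | Sys.MELL => RGB.MELLCorrect

/-- `X`-fibrations. -/
def SysFib : Sys → LabGraph → LabGraph → (ℕ → ℕ) → Prop
  | Sys.MLL  => IsMLLFib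
  | Sys.MLLu => IsMLLuFib
  | Sys.MELL => IsMELLFib

/-- An `X`-combinatorial proof with conclusion graph `H`: an allegiant `X`-fibration
from an `X`-correct RGB-cograph. -/
def IsCombProof (X : Sys) (G : RGB) (f : ℕ → ℕ) (H : LabGraph) : Prop :=
  G.IsRGB ∧ SysCorrect X G ∧ Allegiant G H f ∧ SysFib X G.toLabGraph H f


/-!
Translations are modal: every constructor of `⟦·⟧` preserves proper labelling and the modality
condition, and both are invariant under isomorphism.

Conversely, two distinct vertices of a relation web are joined in exactly one of three ways: by
no edge (`⅋`), by an `R`-edge (`⊗`) or by a `lt`-edge (`◁`). If the graph of pairs *not* joined in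
way `k` is disconnected on a vertex set `s`, all pairs across two of its components are joined in
way `k`, so `s` splits as a `k`-composite. Each of these three graphs is a cograph (by the `P₄`-
and `N`-freeness and the absence of three-coloured triangles), and a vertex whose removal
disconnects one of them lies on an induced `P₄` of it or is joined to all other vertices in a
single way, which isolates it in another one. Hence, by induction, on at least two vertices one of
the three graphs is disconnected. For a `◁`-split, modality yields a least vertex below all the
others, labelled `!` or `?`. Recursing into the parts builds the formula.
-/

theorem Finset.exists_rel_minimal {α : Type*} {r : α → α → Prop} (hirr : ∀ a, ¬ r a a)
    (htr : ∀ a b c, r a b → r b c → r a c) {s : Finset α} (hs : s.Nonempty) :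
    ∃ u ∈ s, ∀ v ∈ s, ¬ r v u := by
  have : IsStrictOrder α r := { irrefl := hirr, trans := htr }
  obtain ⟨⟨u, hu⟩, -, hmin⟩ :=
    (s.finite_toSet.wellFoundedOn (r := r)).has_min Set.univ ⟨⟨_, hs.choose_spec⟩, trivial⟩
  exact ⟨u, hu, fun v hv => hmin ⟨v, hv⟩ trivial⟩

section FiniteGraphs

variable {s : Finset ℕ} {e : ℕ → ℕ → Prop}

def ReachIn (s : Finset ℕ) (e : ℕ → ℕ → Prop) : ℕ → ℕ → Prop :=
  Relation.ReflTransGen fun a b => a ∈ s ∧ b ∈ s ∧ e a b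

def ConnectedOn (s : Finset ℕ) (e : ℕ → ℕ → Prop) : Prop :=
  ∀ u ∈ s, ∀ v ∈ s, ReachIn s e u v

/-- Shaped like the cograph clause of `MGraph.IsRelWeb`, which reads
`¬ InducedP4 G.verts G.R`. -/
def InducedP4 (s : Finset ℕ) (e : ℕ → ℕ → Prop) : Prop :=
  ∃ w x y z, w ∈ s ∧ x ∈ s ∧ y ∈ s ∧ z ∈ s ∧
    w ≠ x ∧ w ≠ y ∧ w ≠ z ∧ x ≠ y ∧ x ≠ z ∧ y ≠ z ∧
    e w x ∧ e x y ∧ e y z ∧ ¬ e w y ∧ ¬ e w z ∧ ¬ e x z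

namespace ReachIn

theorem single {x y : ℕ} (hx : x ∈ s) (hy : y ∈ s) (h : e x y) : ReachIn s e x y :=
  Relation.ReflTransGen.single ⟨hx, hy, h⟩

theorem trans {x y z : ℕ} (hxy : ReachIn s e x y) (hyz : ReachIn s e y z) :
    ReachIn s e x z :=
  Relation.ReflTransGen.trans hxy hyz

theorem symm (he : ∀ {a b}, e a b → e b a) {x y : ℕ} (h : ReachIn s e x y) :
    ReachIn s e y x := by
  induction h with
  | refl => exact .refl
  | tail _ hstep ih => exact .head ⟨hstep.2.1, hstep.1, he hstep.2.2⟩ ih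

theorem mem {x y : ℕ} (h : ReachIn s e x y) (hx : x ∈ s) : y ∈ s := by
  induction h with
  | refl => exact hx
  | tail _ hstep _ => exact hstep.2.1

theorem exists_boundary_edge {P : ℕ → Prop} {x y : ℕ} (h : ReachIn s e x y) (hx : P x)
    (hy : ¬ P y) : ∃ u v, u ∈ s ∧ v ∈ s ∧ P u ∧ ¬ P v ∧ e u v := by
  induction h with
  | refl => exact absurd hx hy
  | @tail b c _ hstep ih =>
    by_cases hb : P b
    · exact ⟨b, c, hstep.1, hstep.2.1, hb, hy, hstep.2.2⟩
    · exact ih hb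

end ReachIn

theorem ConnectedOn.eq_of_isolated (hconn : ConnectedOn s e) {z v : ℕ} (hz : z ∈ s)
    (hv : v ∈ s) (hiso : ∀ w ∈ s, ¬ e z w) : v = z := by
  by_contra hvz
  obtain ⟨u, w, -, hw, rfl, -, huw⟩ :=
    (hconn z hz v hv).exists_boundary_edge (P := (· = z)) rfl hvz
  exact hiso w hw huw

theorem exists_not_reachIn (he : ∀ {a b}, e a b → e b a) (hdis : ¬ ConnectedOn s e) (b : ℕ) :
    ∃ t ∈ s, ¬ ReachIn s e b t := by
  simp only [ConnectedOn, not_forall] at hdis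
  obtain ⟨p, hp, q, hq, hpq⟩ := hdis
  by_cases hbp : ReachIn s e b p
  · exact ⟨q, hq, fun hbq => hpq ((hbp.symm he).trans hbq)⟩
  · exact ⟨p, hp, hbp⟩

theorem iff_of_not_connectedOn (hdis : ¬ ConnectedOn s e) {P : ℕ → Prop}
    (hP : ∀ x ∈ s, ∀ y ∈ s, x ≠ y → ¬ e x y → (P x ↔ P y)) {x y : ℕ} (hx : x ∈ s)
    (hy : y ∈ s) : P x ↔ P y := by
  simp only [ConnectedOn, not_forall] at hdis
  obtain ⟨p, hp, q, hq, hpq⟩ := hdis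
  have hfar {u v} (hu : u ∈ s) (hv : v ∈ s) (huv : ¬ ReachIn s e u v) : P u ↔ P v :=
    hP u hu v hv (by rintro rfl; exact huv .refl) fun h => huv (.single hu hv h)
  have hp' : ∀ u ∈ s, P u ↔ P p := fun u hu => by
    by_cases hpu : ReachIn s e p u
    · exact (hfar hu hq fun huq => hpq (hpu.trans huq)).trans (hfar hp hq hpq).symm
    · exact (hfar hp hu hpu).symm
  exact (hp' x hx).trans (hp' y hy).symm

theorem exists_split_of_not_connectedOn (hdis : ¬ ConnectedOn s e) :
    ∃ X Y : Finset ℕ, X.Nonempty ∧ Y.Nonempty ∧ Disjoint X Y ∧ X ∪ Y = s ∧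
      ∀ x ∈ X, ∀ y ∈ Y, ¬ e x y := by
  classical
  simp only [ConnectedOn, not_forall] at hdis
  obtain ⟨p, hp, q, hq, hpq⟩ := hdis
  refine ⟨s.filter (ReachIn s e p), s.filter (¬ ReachIn s e p ·),
    ⟨p, by simpa using ⟨hp, .refl⟩⟩, ⟨q, by simpa using ⟨hq, hpq⟩⟩,
    Finset.disjoint_filter_filter_not _ _ _, Finset.filter_union_filter_not_eq _ _, ?_⟩
  simp only [Finset.mem_filter]
  exact fun x hx y hy hxy => hy.2 (hx.2.tail ⟨hx.1, hy.1, hxy⟩)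

theorem InducedP4.mono {t : Finset ℕ} (hst : s ⊆ t) (h : InducedP4 s e) : InducedP4 t e := by
  obtain ⟨w, x, y, z, hw, hx, hy, hz, h⟩ := h
  exact ⟨w, x, y, z, hst hw, hst hx, hst hy, hst hz, h⟩

/-- The complement of the path `w - x - y - z` is the path `x - z - w - y`. -/
theorem InducedP4.of_compl (he : ∀ {a b}, e a b → e b a)
    (h : InducedP4 s fun u v => u ≠ v ∧ ¬ e u v) : InducedP4 s e := by
  obtain ⟨w, x, y, z, hw, hx, hy, hz, dwx, dwy, dwz, dxy, dxz, dyz,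
    ⟨-, nwx⟩, ⟨-, nxy⟩, ⟨-, nyz⟩, ewy, ewz, exz⟩ := h
  simp only [not_and, not_not] at ewy ewz exz
  exact ⟨x, z, w, y, hx, hz, hw, hy, dxz, dwx.symm, dxy, dwz.symm, dyz.symm, dwy,
    exz dxz, he (ewz dwz), ewy dwy, fun h => nwx (he h), nxy, fun h => nyz (he h)⟩

/-- The path is `b₁ - a₁ - z - c`, where `b₁, a₁` lie in the component of `b` in `s.erase z`
and `c` in another one. -/
theorem exists_inducedP4_of_not_connectedOn_erase (he : ∀ {a b}, e a b → e b a)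
    (hconn : ConnectedOn s e) {z : ℕ} (hz : z ∈ s) (hdis : ¬ ConnectedOn (s.erase z) e)
    {b : ℕ} (hb : b ∈ s.erase z) (hzb : ¬ e z b) : InducedP4 s e := by
  set s' := s.erase z
  have hs' : s' ⊆ s := Finset.erase_subset z s
  have ne_z {v} (hv : v ∈ s') : v ≠ z := Finset.ne_of_mem_erase hv
  have adj_z {x y} (hx : x ∈ s') (hy : y ∈ s') (hxy : ¬ ReachIn s' e x y) :
      ∃ a, ReachIn s' e x a ∧ e a z := by
    obtain ⟨u, v, -, hv, hxu, hxv, huv⟩ :=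
      (hconn x (hs' hx) y (hs' hy)).exists_boundary_edge (P := ReachIn s' e x) .refl hxy
    by_cases hvz : v = z
    · exact ⟨u, hxu, hvz ▸ huv⟩
    · exact absurd (hxu.tail ⟨hxu.mem hx, Finset.mem_erase.2 ⟨hvz, hv⟩, huv⟩) hxv
  obtain ⟨t, ht, hbt⟩ := exists_not_reachIn he hdis b
  obtain ⟨a, hba, haz⟩ := adj_z hb ht hbt
  obtain ⟨c, htc, hcz⟩ := adj_z ht hb fun htb => hbt (htb.symm he)
  obtain ⟨b₁, a₁, hb₁, ha₁, ⟨hbb₁, hzb₁⟩, hP, hb₁a₁⟩ :=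
    hba.exists_boundary_edge (P := fun x => ReachIn s' e b x ∧ ¬ e z x) ⟨.refl, hzb⟩
      fun h => h.2 (he haz)
  have hba₁ : ReachIn s' e b a₁ := hbb₁.tail ⟨hb₁, ha₁, hb₁a₁⟩
  have hza₁ : e z a₁ := by simpa [hba₁] using hP
  have hc : c ∈ s' := htc.mem ht
  have far {x} (hbx : ReachIn s' e b x) (hx : x ∈ s') : ¬ e x c ∧ x ≠ c :=
    ⟨fun hxc => hbt ((hbx.tail ⟨hx, hc, hxc⟩).trans (htc.symm he)),
      by rintro rfl; exact hbt (hbx.trans (htc.symm he))⟩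
  exact ⟨b₁, a₁, z, c, hs' hb₁, hs' ha₁, hz, hs' hc,
    by rintro rfl; exact hzb₁ hza₁, ne_z hb₁, (far hbb₁ hb₁).2, ne_z ha₁, (far hba₁ ha₁).2,
    (ne_z hc).symm, hb₁a₁, he hza₁, he hcz, fun h => hzb₁ (he h), (far hbb₁ hb₁).1,
    (far hba₁ ha₁).1⟩

end FiniteGraphs

/-- How two vertices of a relation web are joined, named after the connective that separates
them in a translation: no edge (`⅋`), an `R`-edge (`⊗`), a `lt`-edge (`◁`). -/
inductive EdgeKind where
  | par | tens | seq

namespace MGraph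

variable {G : MGraph}

def Joins (G : MGraph) : EdgeKind → ℕ → ℕ → Prop
  | .par, u, v => G.noEdge u v
  | .tens, u, v => G.R u v
  | .seq, u, v => G.lt u v ∨ G.lt v u

def NotJoins (G : MGraph) (k : EdgeKind) (u v : ℕ) : Prop := u ≠ v ∧ ¬ G.Joins k u v

theorem IsMixed.R_symm (hG : G.IsMixed) {u v : ℕ} (h : G.R u v) : G.R v u := hG.1 u v h

theorem IsMixed.R_irrefl (hG : G.IsMixed) (v : ℕ) : ¬ G.R v v := hG.2.1 v

theorem IsMixed.lt_irrefl (hG : G.IsMixed) (v : ℕ) : ¬ G.lt v v := hG.2.2.1 v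

theorem IsMixed.not_R_of_lt (hG : G.IsMixed) {u v : ℕ} (h : G.lt u v) : ¬ G.R u v :=
  fun hR => hG.2.2.2.1 u v ⟨hR, h⟩

theorem IsRelWeb.lt_trans (hG : G.IsRelWeb) {u v w : ℕ} (huv : G.lt u v) (hvw : G.lt v w) :
    G.lt u w :=
  hG.2.2.1 u v w huv hvw

theorem IsMixed.joins_symm (hG : G.IsMixed) {k : EdgeKind} {u v : ℕ} (h : G.Joins k u v) :
    G.Joins k v u := by
  cases k
  · exact ⟨h.2.1, h.1, h.2.2.2, h.2.2.1⟩
  · exact hG.R_symm h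
  · exact h.symm

theorem IsMixed.notJoins_symm (hG : G.IsMixed) {k : EdgeKind} {u v : ℕ}
    (h : G.NotJoins k u v) : G.NotJoins k v u :=
  ⟨h.1.symm, fun h' => h.2 (hG.joins_symm h')⟩

theorem IsMixed.exists_joins (hG : G.IsMixed) (u v : ℕ) : ∃ k, G.Joins k u v := by
  by_cases hR : G.R u v
  · exact ⟨.tens, hR⟩
  by_cases hlt : G.lt u v ∨ G.lt v u
  · exact ⟨.seq, hlt⟩
  simp only [not_or] at hlt
  exact ⟨.par, hR, fun h => hR (hG.R_symm h), hlt⟩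

theorem IsMixed.joins_unique (hG : G.IsMixed) {k k' : EdgeKind} {u v : ℕ}
    (h : G.Joins k u v) (h' : G.Joins k' u v) : k = k' := by
  have hlt_not_R : G.lt u v ∨ G.lt v u → ¬ G.R u v := by
    rintro (hlt | hlt) hR
    · exact hG.not_R_of_lt hlt hR
    · exact hG.not_R_of_lt hlt (hG.R_symm hR)
  cases k <;> cases k' <;> simp only [Joins, noEdge, reduceCtorEq] at h h' ⊢
  · exact h.1 h'
  · exact h'.elim h.2.2.1 h.2.2.2
  · exact h'.1 h
  · exact hlt_not_R h' h
  · exact h.elim h'.2.2.1 h'.2.2.2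
  · exact hlt_not_R h h'

theorem joins_of_not_notJoins {k : EdgeKind} {u v : ℕ} (huv : u ≠ v)
    (h : ¬ G.NotJoins k u v) : G.Joins k u v := by
  simpa [NotJoins, huv] using h

/-- The absence of three-coloured triangles. -/
theorem IsRelWeb.eq_of_joins_triangle (hG : G.IsRelWeb) {x y z : ℕ} (hx : x ∈ G.verts)
    (hy : y ∈ G.verts) (hz : z ∈ G.verts) (hxy : x ≠ y) (hzx : z ≠ x) (hzy : z ≠ y)
    {k k₁ k₂ : EdgeKind} (h : G.Joins k x y) (h₁ : G.Joins k₁ z x) (h₂ : G.Joins k₂ z y)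
    (hk₁ : k₁ ≠ k) (hk₂ : k₂ ≠ k) : k₁ = k₂ := by
  have hsymm {k u v} : G.Joins k u v → G.Joins k v u := hG.1.joins_symm
  have no3 {u w v} (hu : u ∈ G.verts) (hw : w ∈ G.verts) (hv : v ∈ G.verts) (huw : u ≠ w)
      (huv : u ≠ v) (hwv : w ≠ v) (h₁ : G.Joins .par u w) (h₂ : G.Joins .tens w v)
      (h₃ : G.Joins .seq u v) : False :=
    hG.2.2.2.2.2 ⟨_, _, _, hu, hw, hv, huw, huv, hwv, h₁, h₂, h₃⟩
  by_contra h₁₂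
  cases k <;> cases k₁ <;> cases k₂ <;> simp only [ne_eq, not_true_eq_false] at hk₁ hk₂ h₁₂
  · exact no3 hy hx hz hxy.symm hzy.symm hzx.symm (hsymm h) (hsymm h₁) (hsymm h₂)
  · exact no3 hx hy hz hxy hzx.symm hzy.symm h (hsymm h₂) (hsymm h₁)
  · exact no3 hz hx hy hzx hzy hxy h₁ h h₂
  · exact no3 hz hy hx hzy hzx hxy.symm h₂ (hsymm h) h₁
  · exact no3 hx hz hy hzx.symm hxy hzy (hsymm h₁) h₂ h
  · exact no3 hy hz hx hzy.symm hxy.symm hzx (hsymm h₂) h₁ (hsymm h)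

theorem IsRelWeb.joins_iff_of_triangle (hG : G.IsRelWeb) {x y z : ℕ} (hx : x ∈ G.verts)
    (hy : y ∈ G.verts) (hz : z ∈ G.verts) (hxy : x ≠ y) {k : EdgeKind} (h : G.Joins k x y)
    (hzx : G.NotJoins k z x) (hzy : G.NotJoins k z y) (d : EdgeKind) :
    G.Joins d z x ↔ G.Joins d z y := by
  obtain ⟨k₁, h₁⟩ := hG.1.exists_joins z x
  obtain ⟨k₂, h₂⟩ := hG.1.exists_joins z y
  obtain rfl : k₁ = k₂ := hG.eq_of_joins_triangle hx hy hz hxy hzx.1 hzy.1 h h₁ h₂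
    (by rintro rfl; exact hzx.2 h₁) (by rintro rfl; exact hzy.2 h₂)
  exact ⟨fun hd => hG.1.joins_unique h₁ hd ▸ h₂, fun hd => hG.1.joins_unique h₂ hd ▸ h₁⟩

/-- Orienting an induced `P₄` of the comparability graph, transitivity forces its two middle
vertices to be both maxima or both minima of the path, and then it is an `N`. -/
theorem IsRelWeb.not_inducedP4_seq (hG : G.IsRelWeb) : ¬ InducedP4 G.verts (G.Joins .seq) := by
  obtain ⟨-, -, htr, -, hN, -⟩ := hG
  rintro ⟨p, q, r, s, hp, hq, hr, hs, dpq, dpr, dps, dqr, dqs, drs, hpq, hqr, hrs, npr, nps, nqs⟩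
  simp only [Joins, not_or] at hpq hqr hrs npr nps nqs
  rcases hpq with hpq | hqp <;> rcases hqr with hqr | hrq
  · exact npr.1 (htr _ _ _ hpq hqr)
  · rcases hrs with hrs | hsr
    · exact hN ⟨p, q, r, s, hp, hq, hr, hs, dpq, dpr, dps, dqr, dqs, drs, hpq, hrq, hrs,
        npr.1, npr.2, nps.1, nps.2, nqs.1, nqs.2⟩
    · exact nqs.2 (htr _ _ _ hsr hrq)
  · rcases hrs with hrs | hsr
    · exact nqs.1 (htr _ _ _ hqr hrs)
    · exact hN ⟨s, r, q, p, hs, hr, hq, hp, drs.symm, dqs.symm, dps.symm, dqr.symm, dpr.symm,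
        dpq.symm, hsr, hqr, hqp, nqs.2, nqs.1, nps.2, nps.1, npr.2, npr.1⟩
  · exact npr.2 (htr _ _ _ hrq hqp)

theorem IsRelWeb.not_inducedP4_joins (hG : G.IsRelWeb) {k : EdgeKind} (hk : k ≠ .par) :
    ¬ InducedP4 G.verts (G.Joins k) := by
  cases k
  · exact absurd rfl hk
  · exact hG.2.2.2.1
  · exact hG.not_inducedP4_seq

/-- For `k ≠ par`, `NotJoins k` is the complement of `Joins k`. For `k = par`, the three sides
of an induced `P₄` are joined in one and the same way, by the absence of three-coloured
triangles. -/
theorem IsRelWeb.not_inducedP4_notJoins (hG : G.IsRelWeb) (k : EdgeKind) :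
    ¬ InducedP4 G.verts (G.NotJoins k) := by
  intro hP
  by_cases hk : k = .par
  · subst hk
    obtain ⟨w, x, y, z, hw, hx, hy, hz, dwx, dwy, dwz, dxy, dxz, dyz, ewx, exy, eyz,
      nwy, nwz, nxz⟩ := hP
    replace nwy := joins_of_not_notJoins dwy nwy
    replace nwz := joins_of_not_notJoins dwz nwz
    replace nxz := joins_of_not_notJoins dxz nxz
    obtain ⟨d, hwx⟩ := hG.1.exists_joins w x
    have hd : d ≠ .par := by rintro rfl; exact ewx.2 hwx
    have hxy : G.Joins d x y := (hG.joins_iff_of_triangle hw hy hx dwy nwy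
      (hG.1.notJoins_symm ewx) exy d).1 (hG.1.joins_symm hwx)
    have hyz : G.Joins d y z := (hG.joins_iff_of_triangle hx hz hy dxz nxz
      (hG.1.notJoins_symm exy) eyz d).1 (hG.1.joins_symm hxy)
    have hnot {u v} (h : G.Joins .par u v) : ¬ G.Joins d u v := fun h' =>
      hd (hG.1.joins_unique h' h)
    exact hG.not_inducedP4_joins hd ⟨w, x, y, z, hw, hx, hy, hz, dwx, dwy, dwz, dxy, dxz, dyz,
      hwx, hxy, hyz, hnot nwy, hnot nwz, hnot nxz⟩
  · exact hG.not_inducedP4_joins hk (hP.of_compl hG.1.joins_symm)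

theorem not_connectedOn_of_forall_joins {s : Finset ℕ} {z p : ℕ} (hz : z ∈ s) (hp : p ∈ s)
    (hpz : p ≠ z) {d : EdgeKind} (hall : ∀ w ∈ s, w ≠ z → G.Joins d z w) :
    ¬ ConnectedOn s (G.NotJoins d) := fun hconn =>
  hpz (hconn.eq_of_isolated hz hp fun w hw hzw => hzw.2 (hall w hw hzw.1.symm))

/-- If removing `z` disconnected one of the graphs, `z` would either lie on an induced `P₄` of
it, or be joined to all other vertices in one and the same way and thus be isolated in
another one. -/
theorem IsRelWeb.connectedOn_erase (hG : G.IsRelWeb) {s : Finset ℕ} (hs : s ⊆ G.verts)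
    (hconn : ∀ k, ConnectedOn s (G.NotJoins k)) {z : ℕ} (hz : z ∈ s) (k : EdgeKind) :
    ConnectedOn (s.erase z) (G.NotJoins k) := by
  by_contra hdis
  have hs' : s.erase z ⊆ G.verts := (Finset.erase_subset z s).trans hs
  by_cases hb : ∃ b ∈ s.erase z, ¬ G.NotJoins k z b
  · obtain ⟨b, hb, hzb⟩ := hb
    exact hG.not_inducedP4_notJoins k ((exists_inducedP4_of_not_connectedOn_erase
      hG.1.notJoins_symm (hconn k) hz hdis hb hzb).mono hs)
  simp only [not_exists, not_and, not_not] at hb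
  obtain ⟨p, hp, -⟩ := exists_not_reachIn hG.1.notJoins_symm hdis z
  obtain ⟨d, hzp⟩ := hG.1.exists_joins z p
  have hall : ∀ w ∈ s.erase z, G.Joins d z w := fun w hw =>
    (iff_of_not_connectedOn hdis (fun x hx y hy hxy hnxy => hG.joins_iff_of_triangle (hs' hx)
      (hs' hy) (hs hz) hxy (joins_of_not_notJoins hxy hnxy) (hb x hx) (hb y hy) d) hp hw).1 hzp
  exact not_connectedOn_of_forall_joins hz (Finset.mem_of_mem_erase hp)
    (Finset.ne_of_mem_erase hp) (fun w hw hwz => hall w (Finset.mem_erase.2 ⟨hwz, hw⟩))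
    (hconn d)

theorem IsRelWeb.exists_not_connectedOn (hG : G.IsRelWeb) (s : Finset ℕ) (hs : s ⊆ G.verts)
    (h2 : 1 < s.card) : ∃ k, ¬ ConnectedOn s (G.NotJoins k) := by
  induction s using Finset.strongInduction with
  | H s ih =>
  by_contra! hconn
  obtain ⟨z, hz⟩ : s.Nonempty := Finset.card_pos.1 (by omega)
  by_cases h3 : 2 < s.card
  · obtain ⟨k, hk⟩ := ih (s.erase z) (Finset.erase_ssubset hz)
      ((Finset.erase_subset z s).trans hs) (by rw [Finset.card_erase_of_mem hz]; omega)
    exact hk (hG.connectedOn_erase hs hconn hz k)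
  · obtain ⟨p, hp, hpz⟩ := Finset.exists_mem_ne h2 z
    obtain ⟨d, hzp⟩ := hG.1.exists_joins z p
    refine not_connectedOn_of_forall_joins hz hp hpz (fun w hw hwz => ?_) (hconn d)
    by_contra hwp
    exact h3 (Finset.two_lt_card.2
      ⟨z, hz, p, hp, w, hw, hpz.symm, hwz.symm, fun h => hwp (h ▸ hzp)⟩)

end MGraph

theorem Nat.two_mul_add_one_ne_two_mul {m n : ℕ} : 2 * m + 1 ≠ 2 * n :=
  fun h => Nat.two_mul_ne_two_mul_add_one h.symm

namespace LabGraph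

/-- `G` with vertex set `s`. Since `Iso` only looks at edges between vertices,
`Iso (G.restrict s) H` says that the subgraph of `G` induced on `s` is isomorphic to `H`. -/
def restrict (G : LabGraph) (s : Finset ℕ) : LabGraph := { G with verts := s }

/-- `K` carries a copy of `H₁` on the even and a copy of `H₂` on the odd numbers, like the
translations `H₁ ⅋ H₂`, `H₁ ⊗ H₂`, `H₁ ◁ H₂`; only the edges between the copies are left open. -/
def IsSumOf (K H₁ H₂ : LabGraph) : Prop :=
  K.verts = H₁.verts.image (2 * ·) ∪ H₂.verts.image (2 * · + 1) ∧
  (∀ a b, (K.R (2 * a) (2 * b) ↔ H₁.R a b) ∧ (K.lt (2 * a) (2 * b) ↔ H₁.lt a b) ∧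
    (K.R (2 * a + 1) (2 * b + 1) ↔ H₂.R a b) ∧ (K.lt (2 * a + 1) (2 * b + 1) ↔ H₂.lt a b)) ∧
  ∀ a, K.lab (2 * a) = H₁.lab a ∧ K.lab (2 * a + 1) = H₂.lab a

theorem isSumOf_gparr (H₁ H₂ : LabGraph) : (H₁.gparr H₂).IsSumOf H₁ H₂ :=
  ⟨rfl, fun a b => by simp [gparr, Nat.add_div_of_dvd_right], fun a => by
    simp [gparr, Nat.add_div_of_dvd_right]⟩

theorem isSumOf_gtens (H₁ H₂ : LabGraph) : (H₁.gtens H₂).IsSumOf H₁ H₂ :=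
  ⟨rfl, fun a b => by simp [gtens, gparr, Nat.add_div_of_dvd_right], fun a => by
    simp [gtens, gparr, Nat.add_div_of_dvd_right]⟩

theorem isSumOf_gseq (H₁ H₂ : LabGraph) : (H₁.gseq H₂).IsSumOf H₁ H₂ :=
  ⟨rfl, fun a b => by simp [gseq, gparr, Nat.add_div_of_dvd_right], fun a => by
    simp [gseq, gparr, Nat.add_div_of_dvd_right]⟩

section Translations

variable {G H : LabGraph}

theorem mem_gparr_verts {v : ℕ} : v ∈ (G.gparr H).verts ↔
    (∃ a ∈ G.verts, v = 2 * a) ∨ ∃ b ∈ H.verts, v = 2 * b + 1 := by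
  simp [gparr, eq_comm]

theorem two_mul_mem_gparr {a : ℕ} : 2 * a ∈ (G.gparr H).verts ↔ a ∈ G.verts := by
  simp [mem_gparr_verts, Nat.two_mul_ne_two_mul_add_one]

theorem two_mul_add_one_mem_gparr {a : ℕ} : 2 * a + 1 ∈ (G.gparr H).verts ↔ a ∈ H.verts := by
  simp [mem_gparr_verts, Nat.two_mul_add_one_ne_two_mul, eq_comm]

theorem gparr_lt {u v : ℕ} : (G.gparr H).lt u v ↔
    (∃ a b, u = 2 * a ∧ v = 2 * b ∧ G.lt a b) ∨
      ∃ a b, u = 2 * a + 1 ∧ v = 2 * b + 1 ∧ H.lt a b := by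
  constructor
  · rintro (⟨hu, hv, h⟩ | ⟨hu, hv, h⟩)
    · exact .inl ⟨u / 2, v / 2, by omega, by omega, h⟩
    · exact .inr ⟨u / 2, v / 2, by omega, by omega, h⟩
  · rintro (⟨a, b, rfl, rfl, h⟩ | ⟨a, b, rfl, rfl, h⟩)
    · exact .inl ⟨by omega, by omega, by simpa using h⟩
    · exact .inr ⟨by omega, by omega, by simpa [Nat.add_div_of_dvd_right] using h⟩

theorem exists_gparr_lt_two_mul {a : ℕ} :
    (∃ w, (G.gparr H).lt (2 * a) w) ↔ ∃ w, G.lt a w := by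
  simp [gparr_lt, Nat.two_mul_ne_two_mul_add_one]

theorem exists_gparr_lt_two_mul_add_one {a : ℕ} :
    (∃ w, (G.gparr H).lt (2 * a + 1) w) ↔ ∃ w, H.lt a w := by
  simp [gparr_lt, Nat.two_mul_add_one_ne_two_mul, eq_comm]

theorem gseq_lt {u v : ℕ} : (G.gseq H).lt u v ↔
    (G.gparr H).lt u v ∨ ∃ a ∈ G.verts, ∃ b ∈ H.verts, u = 2 * a ∧ v = 2 * b + 1 := by
  refine or_congr_right ⟨fun ⟨hu, hv, ha, hb⟩ => ⟨u / 2, ha, v / 2, hb, by omega, by omega⟩, ?_⟩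
  rintro ⟨a, ha, b, hb, rfl, rfl⟩
  exact ⟨by omega, by omega, by simpa using ha, by simpa [Nat.add_div_of_dvd_right] using hb⟩

def LtWithin (H : LabGraph) : Prop := ∀ u v, H.lt u v → u ∈ H.verts ∧ v ∈ H.verts

theorem ltWithin_of_isMixed (hG : G.IsMixed) : G.LtWithin := hG.2.2.2.2.2

theorem ltWithin_gparr (hG : G.LtWithin) (hH : H.LtWithin) : (G.gparr H).LtWithin := by
  intro u v h
  rcases gparr_lt.1 h with ⟨a, b, rfl, rfl, hab⟩ | ⟨a, b, rfl, rfl, hab⟩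
  · simpa only [two_mul_mem_gparr] using hG a b hab
  · simpa only [two_mul_add_one_mem_gparr] using hH a b hab

theorem ltWithin_gseq (hG : G.LtWithin) (hH : H.LtWithin) : (G.gseq H).LtWithin := by
  intro u v h
  rcases gseq_lt.1 h with h | ⟨a, ha, b, hb, rfl, rfl⟩
  · exact ltWithin_gparr hG hH u v h
  · exact ⟨two_mul_mem_gparr.2 ha, two_mul_add_one_mem_gparr.2 hb⟩

theorem isModalLab_point {l : GLabel} (hb : l ≠ .bang) (hq : l ≠ .quest) :
    (point l).IsModalLab :=
  ⟨fun _ _ => iff_of_false (fun ⟨_, h⟩ => h) (by simp [point, hb, hq]),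
    fun _ _ _ _ _ _ h => h.elim⟩

theorem isModalLab_gparr (hG : G.IsModalLab) (hH : H.IsModalLab) :
    (G.gparr H).IsModalLab := by
  refine ⟨fun v hv => ?_, fun u v w hu hv hw huw hvw huv => ?_⟩
  · rcases mem_gparr_verts.1 hv with ⟨a, ha, rfl⟩ | ⟨a, ha, rfl⟩
    · rw [exists_gparr_lt_two_mul, ((isSumOf_gparr G H).2.2 a).1]
      exact hG.1 a ha
    · rw [exists_gparr_lt_two_mul_add_one, ((isSumOf_gparr G H).2.2 a).2]
      exact hH.1 a ha
  · rcases gparr_lt.1 huw with ⟨a, c, rfl, rfl, ha⟩ | ⟨a, c, rfl, rfl, ha⟩ <;>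
      rcases gparr_lt.1 hvw with ⟨b, c', rfl, hc, hb⟩ | ⟨b, c', rfl, hc, hb⟩ <;>
      first | omega | obtain rfl : c' = c := by omega
    · rw [two_mul_mem_gparr] at hu hv hw
      refine (hG.2 a b _ hu hv hw ha hb (by rintro rfl; exact huv rfl)).imp ?_ ?_ <;>
        exact fun h => gparr_lt.2 (.inl ⟨_, _, rfl, rfl, h⟩)
    · rw [two_mul_add_one_mem_gparr] at hu hv hw
      refine (hH.2 a b _ hu hv hw ha hb (by rintro rfl; exact huv rfl)).imp ?_ ?_ <;>
        exact fun h => gparr_lt.2 (.inr ⟨_, _, rfl, rfl, h⟩)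

theorem isModalLab_gseq_point {l : GLabel} (hl : l = .bang ∨ l = .quest) (hH : H.IsModalLab)
    (hHlt : H.LtWithin) (hne : H.verts.Nonempty) : ((point l).gseq H).IsModalLab := by
  have hlt {u v} : ((point l).gseq H).lt u v ↔ (∃ b ∈ H.verts, u = 0 ∧ v = 2 * b + 1) ∨
      ∃ a b, u = 2 * a + 1 ∧ v = 2 * b + 1 ∧ H.lt a b := by
    simp [gseq_lt, gparr_lt, point, or_comm]
  refine ⟨fun v hv => ?_, fun u v w _ _ _ huw hvw huv => ?_⟩
  · rcases mem_gparr_verts.1 hv with ⟨a, ha, rfl⟩ | ⟨a, ha, rfl⟩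
    · obtain rfl : a = 0 := Finset.mem_singleton.1 ha
      obtain ⟨b, hb⟩ := hne
      exact iff_of_true ⟨_, hlt.2 (.inl ⟨b, hb, rfl, rfl⟩)⟩ hl
    · rw [((isSumOf_gseq _ H).2.2 a).2]
      simpa [hlt, Nat.two_mul_add_one_ne_two_mul, eq_comm] using hH.1 a ha
  · rcases hlt.1 huw with ⟨c, -, rfl, rfl⟩ | ⟨a, c, rfl, rfl, ha⟩ <;>
      rcases hlt.1 hvw with ⟨c', -, rfl, hc⟩ | ⟨b, c', rfl, hc, hb⟩
    · exact absurd rfl huv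
    · exact .inl (hlt.2 (.inl ⟨b, (hHlt b c' hb).1, rfl, rfl⟩))
    · exact .inr (hlt.2 (.inl ⟨a, (hHlt a c ha).1, rfl, rfl⟩))
    · obtain rfl : c' = c := by omega
      refine (hH.2 a b _ (hHlt a _ ha).1 (hHlt b _ hb).1 (hHlt a _ ha).2 ha hb
        (by rintro rfl; exact huv rfl)).imp ?_ ?_ <;>
        exact fun h => hlt.2 (.inr ⟨_, _, rfl, rfl, h⟩)

theorem trans_verts_nonempty (F : Formula) : (trans F).verts.Nonempty := by
  induction F with
  | parr A B ihA => exact ⟨_, two_mul_mem_gparr.2 ihA.choose_spec⟩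
  | tens A B ihA => exact ⟨_, two_mul_mem_gparr.2 ihA.choose_spec⟩
  | bang A => exact ⟨_, two_mul_mem_gparr.2 (Finset.mem_singleton_self 0)⟩
  | quest A => exact ⟨_, two_mul_mem_gparr.2 (Finset.mem_singleton_self 0)⟩
  | _ => exact ⟨0, Finset.mem_singleton_self 0⟩

theorem trans_ltWithin (F : Formula) : (trans F).LtWithin := by
  induction F with
  | parr A B ihA ihB => exact ltWithin_gparr ihA ihB
  | tens A B ihA ihB => exact ltWithin_gparr ihA ihB
  | bang A ih => exact ltWithin_gseq (fun _ _ h => h.elim) ih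
  | quest A ih => exact ltWithin_gseq (fun _ _ h => h.elim) ih
  | _ => exact fun _ _ h => h.elim

theorem trans_isModalLab (F : Formula) : (trans F).IsModalLab := by
  induction F with
  | parr A B ihA ihB => exact isModalLab_gparr ihA ihB
  | tens A B ihA ihB => exact isModalLab_gparr ihA ihB
  | bang A ih =>
    exact isModalLab_gseq_point (.inl rfl) ih (trans_ltWithin A) (trans_verts_nonempty A)
  | quest A ih =>
    exact isModalLab_gseq_point (.inr rfl) ih (trans_ltWithin A) (trans_verts_nonempty A)
  | _ => exact isModalLab_point nofun nofun

theorem IsModalLab.of_iso (hG : G.LtWithin) (hHlt : H.LtWithin) (hH : H.IsModalLab)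
    (hiso : Iso G H) : G.IsModalLab := by
  obtain ⟨f, hf, hrel, hlab⟩ := hiso
  refine ⟨fun v hv => ?_, fun u v w hu hv hw huw hvw huv => ?_⟩
  · rw [← hlab v hv, ← hH.1 (f v) (hf.mapsTo hv)]
    constructor
    · rintro ⟨w, hw⟩
      exact ⟨f w, ((hrel v hv w (hG v w hw).2).2).1 hw⟩
    · rintro ⟨w', hw'⟩
      obtain ⟨w, hw, rfl⟩ := hf.surjOn (hHlt _ _ hw').2
      exact ⟨w, ((hrel v hv w hw).2).2 hw'⟩
  · exact (hH.2 _ _ _ (hf.mapsTo hu) (hf.mapsTo hv) (hf.mapsTo hw) ((hrel u hu w hw).2.1 huw)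
      ((hrel v hv w hw).2.1 hvw) fun h => huv (hf.injOn hu hv h)).imp (hrel u hu v hv).2.2
      (hrel v hv u hu).2.2

end Translations

section Isomorphisms

variable {G H₁ H₂ : LabGraph} {X Y : Finset ℕ}

/-- The glued isomorphism is `x ↦ 2 f₁ x` on `X` and `y ↦ 2 f₂ y + 1` on `Y`. -/
theorem iso_restrict_union {K : LabGraph} (hXY : Disjoint X Y)
    (h₁ : Iso (G.restrict X) H₁) (h₂ : Iso (G.restrict Y) H₂) (hK : K.IsSumOf H₁ H₂)
    (hcross : ∀ x ∈ X, ∀ y ∈ Y, ∀ a ∈ H₁.verts, ∀ b ∈ H₂.verts,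
      (G.R x y ↔ K.R (2 * a) (2 * b + 1)) ∧ (G.R y x ↔ K.R (2 * b + 1) (2 * a)) ∧
      (G.lt x y ↔ K.lt (2 * a) (2 * b + 1)) ∧ (G.lt y x ↔ K.lt (2 * b + 1) (2 * a))) :
    Iso (G.restrict (X ∪ Y)) K := by
  obtain ⟨f₁, hf₁, hrel₁, hlab₁⟩ := h₁
  obtain ⟨f₂, hf₂, hrel₂, hlab₂⟩ := h₂
  obtain ⟨hverts, hK, hKlab⟩ := hK
  obtain ⟨f, hfX, hfY⟩ : ∃ f : ℕ → ℕ, (∀ v ∈ X, f v = 2 * f₁ v) ∧ ∀ v ∈ Y, f v = 2 * f₂ v + 1 :=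
    ⟨fun v => if v ∈ X then 2 * f₁ v else 2 * f₂ v + 1, fun v hv => if_pos hv,
      fun v hv => if_neg (Finset.disjoint_right.1 hXY hv)⟩
  refine ⟨f, ?_, ?_, ?_⟩
  · simp only [restrict, hverts, Finset.coe_union, Finset.coe_image]
    refine Set.BijOn.union ?_ ?_ ?_
    · exact (((mul_right_injective₀ two_ne_zero).injOn).bijOn_image.comp hf₁).congr
        fun v hv => (hfX v hv).symm
    · exact ((((add_left_injective 1).comp (mul_right_injective₀ two_ne_zero)).injOn).bijOn_image
        |>.comp hf₂).congr fun v hv => (hfY v hv).symm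
    · rintro u (hu | hu) v (hv | hv) huv
      · rw [hfX u hu, hfX v hv] at huv; exact hf₁.injOn hu hv (by omega)
      · rw [hfX u hu, hfY v hv] at huv; omega
      · rw [hfY u hu, hfX v hv] at huv; omega
      · rw [hfY u hu, hfY v hv] at huv; exact hf₂.injOn hu hv (by omega)
  · intro u hu v hv
    simp only [restrict, Finset.mem_union] at hu hv ⊢
    rcases hu with hu | hu <;> rcases hv with hv | hv
    · simp only [hfX u hu, hfX v hv, (hK _ _).1, (hK _ _).2.1]
      exact hrel₁ u hu v hv
    · simp only [hfX u hu, hfY v hv]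
      obtain ⟨h1, -, h3, -⟩ := hcross u hu v hv _ (hf₁.mapsTo hu) _ (hf₂.mapsTo hv)
      exact ⟨h1, h3⟩
    · simp only [hfY u hu, hfX v hv]
      obtain ⟨-, h2, -, h4⟩ := hcross v hv u hu _ (hf₁.mapsTo hv) _ (hf₂.mapsTo hu)
      exact ⟨h2, h4⟩
    · simp only [hfY u hu, hfY v hv, (hK _ _).2.2.1, (hK _ _).2.2.2]
      exact hrel₂ u hu v hv
  · intro v hv
    simp only [restrict, Finset.mem_union] at hv
    rcases hv with hv | hv
    · simp only [hfX v hv, (hKlab _).1]; exact hlab₁ v hv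
    · simp only [hfY v hv, (hKlab _).2]; exact hlab₂ v hv

theorem iso_restrict_singleton (hG : G.IsMixed) (v : ℕ) :
    Iso (G.restrict {v}) (point (G.lab v)) := by
  refine ⟨fun _ => 0, ⟨fun _ _ => Finset.mem_singleton_self 0, ?_, ?_⟩, ?_, ?_⟩
  · simp [restrict]
  · exact fun w hw => ⟨v, Finset.mem_singleton_self v, (Finset.mem_singleton.1 hw).symm⟩
  · rintro u hu w hw
    obtain rfl := Finset.mem_singleton.1 hu
    obtain rfl := Finset.mem_singleton.1 hw
    exact ⟨iff_of_false (hG.R_irrefl _) id, iff_of_false (hG.lt_irrefl _) id⟩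
  · rintro u hu
    obtain rfl := Finset.mem_singleton.1 hu
    rfl

theorem iso_gparr (hXY : Disjoint X Y) (hcross : ∀ x ∈ X, ∀ y ∈ Y, G.noEdge x y)
    (h₁ : Iso (G.restrict X) H₁) (h₂ : Iso (G.restrict Y) H₂) :
    Iso (G.restrict (X ∪ Y)) (H₁.gparr H₂) :=
  iso_restrict_union hXY h₁ h₂ (isSumOf_gparr H₁ H₂) fun x hx y hy _ _ _ _ => by
    obtain ⟨hRxy, hRyx, hxy, hyx⟩ := hcross x hx y hy
    simp [gparr, hRxy, hRyx, hxy, hyx]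

theorem iso_gtens (hG : G.IsMixed) (hXY : Disjoint X Y) (hcross : ∀ x ∈ X, ∀ y ∈ Y, G.R x y)
    (h₁ : Iso (G.restrict X) H₁) (h₂ : Iso (G.restrict Y) H₂) :
    Iso (G.restrict (X ∪ Y)) (H₁.gtens H₂) :=
  iso_restrict_union hXY h₁ h₂ (isSumOf_gtens H₁ H₂) fun x hx y hy a ha b hb => by
    have hRxy := hcross x hx y hy
    have hRyx := hG.R_symm hRxy
    have hxy : ¬ G.lt x y := fun h => hG.not_R_of_lt h hRxy
    have hyx : ¬ G.lt y x := fun h => hG.not_R_of_lt h hRyx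
    simp [gtens, gparr, Nat.add_div_of_dvd_right, hRxy, hRyx, hxy, hyx, ha, hb]

theorem iso_gseq (hG : G.IsRelWeb) (hXY : Disjoint X Y) (hcross : ∀ x ∈ X, ∀ y ∈ Y, G.lt x y)
    (h₁ : Iso (G.restrict X) H₁) (h₂ : Iso (G.restrict Y) H₂) :
    Iso (G.restrict (X ∪ Y)) (H₁.gseq H₂) :=
  iso_restrict_union hXY h₁ h₂ (isSumOf_gseq H₁ H₂) fun x hx y hy a ha b hb => by
    have hxy := hcross x hx y hy
    have hyx : ¬ G.lt y x := fun h => hG.1.lt_irrefl x (hG.lt_trans hxy h)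
    have hRxy : ¬ G.R x y := hG.1.not_R_of_lt hxy
    have hRyx : ¬ G.R y x := fun h => hRxy (hG.1.R_symm h)
    simp [gseq, gparr, Nat.add_div_of_dvd_right, hxy, hyx, hRxy, hRyx, ha, hb]

theorem iso_restrict_gseq_erase (hG : G.IsRelWeb) {s : Finset ℕ} {u : ℕ} (hu : u ∈ s)
    (hlt : ∀ v ∈ s, v ≠ u → G.lt u v) (h : Iso (G.restrict (s.erase u)) H₂) :
    Iso (G.restrict s) ((point (G.lab u)).gseq H₂) := by
  have hiso := iso_gseq hG (Finset.disjoint_singleton_left.2 (Finset.notMem_erase u s))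
    (fun x hx y hy => Finset.mem_singleton.1 hx ▸ hlt y (Finset.mem_of_mem_erase hy)
      (Finset.ne_of_mem_erase hy)) (iso_restrict_singleton hG.1 u) h
  rwa [← Finset.insert_eq, Finset.insert_erase hu] at hiso

end Isomorphisms

section Decomposition

variable {G : LabGraph}

def LtClosed (G : LabGraph) (s : Finset ℕ) : Prop := ∀ v ∈ s, ∀ w, G.lt v w → w ∈ s

theorem LtClosed.erase_of_forall_lt (hG : G.IsRelWeb) {s : Finset ℕ} (hcl : G.LtClosed s)
    {u : ℕ} (hlt : ∀ v ∈ s, v ≠ u → G.lt u v) : G.LtClosed (s.erase u) := by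
  intro v hv w hvw
  refine Finset.mem_erase.2 ⟨?_, hcl v (Finset.mem_of_mem_erase hv) w hvw⟩
  rintro rfl
  exact hG.1.lt_irrefl _ (hG.lt_trans (hlt v (Finset.mem_of_mem_erase hv)
    (Finset.ne_of_mem_erase hv)) hvw)

theorem exists_trans_eq_point {l : GLabel} (hb : l ≠ .bang) (hq : l ≠ .quest) :
    ∃ F, trans F = point l := by
  cases l with
  | atom a => exact ⟨.atom a, rfl⟩
  | natom a => exact ⟨.natom a, rfl⟩
  | bang => exact absurd rfl hb
  | quest => exact absurd rfl hq
  | one => exact ⟨.one, rfl⟩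
  | bot => exact ⟨.bot, rfl⟩
  | hole => exact ⟨.hole, rfl⟩

theorem exists_trans_eq_gseq {l : GLabel} (hl : l = .bang ∨ l = .quest) (F : Formula) :
    ∃ F', trans F' = (point l).gseq (trans F) := by
  rcases hl with rfl | rfl
  exacts [⟨.bang F, rfl⟩, ⟨.quest F, rfl⟩]

theorem exists_iso_trans_restrict_singleton (hG : G.IsMixed) (hM : G.IsModalLab) {v : ℕ}
    (hv : v ∈ G.verts) (hcl : G.LtClosed {v}) : ∃ F, Iso (G.restrict {v}) (trans F) := by
  have hlab : ¬ (G.lab v = .bang ∨ G.lab v = .quest) := fun h => by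
    obtain ⟨w, hw⟩ := (hM.1 v hv).2 h
    obtain rfl := Finset.mem_singleton.1 (hcl v (Finset.mem_singleton_self v) w hw)
    exact hG.lt_irrefl _ hw
  obtain ⟨F, hF⟩ := exists_trans_eq_point (not_or.1 hlab).1 (not_or.1 hlab).2
  exact ⟨F, hF ▸ iso_restrict_singleton hG v⟩

theorem exists_ltClosed_split (hG : G.IsRelWeb) {s : Finset ℕ} (hcl : G.LtClosed s) {k : EdgeKind}
    (hdis : ¬ ConnectedOn s (G.NotJoins k)) (hk : k ≠ .seq) :
    ∃ X Y, X ⊂ s ∧ Y ⊂ s ∧ X.Nonempty ∧ Y.Nonempty ∧ Disjoint X Y ∧ X ∪ Y = s ∧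
      G.LtClosed X ∧ G.LtClosed Y ∧ ∀ x ∈ X, ∀ y ∈ Y, G.Joins k x y := by
  obtain ⟨X, Y, hX, hY, hXY, rfl, hcross⟩ := exists_split_of_not_connectedOn hdis
  have hjoins : ∀ x ∈ X, ∀ y ∈ Y, G.Joins k x y := fun x hx y hy =>
    MGraph.joins_of_not_notJoins (by rintro rfl; exact Finset.disjoint_left.1 hXY hx hy)
      (hcross x hx y hy)
  have hinc : ∀ x ∈ X, ∀ y ∈ Y, ¬ G.lt x y ∧ ¬ G.lt y x := fun x hx y hy => by
    have h := hjoins x hx y hy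
    cases k
    · exact ⟨h.2.2.1, h.2.2.2⟩
    · exact ⟨fun h' => hG.1.not_R_of_lt h' h, fun h' => hG.1.not_R_of_lt h' (hG.1.R_symm h)⟩
    · exact absurd rfl hk
  refine ⟨X, Y, ⟨Finset.subset_union_left, fun h => ?_⟩, ⟨Finset.subset_union_right, fun h => ?_⟩,
    hX, hY, hXY, rfl, fun v hv w hvw => ?_, fun v hv w hvw => ?_, hjoins⟩
  · obtain ⟨y, hy⟩ := hY
    exact Finset.disjoint_right.1 hXY hy (h (Finset.mem_union_right X hy))
  · obtain ⟨x, hx⟩ := hX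
    exact Finset.disjoint_left.1 hXY hx (h (Finset.mem_union_left Y hx))
  · exact (Finset.mem_union.1 (hcl v (Finset.mem_union_left Y hv) w hvw)).resolve_right
      fun hw => (hinc v hv w hw).1 hvw
  · exact (Finset.mem_union.1 (hcl v (Finset.mem_union_right X hv) w hvw)).resolve_left
      fun hw => (hinc w hw v hv).2 hvw

/-- A minimal vertex `u` of `s` works: by modality, `x = u ∨ u < x` takes the same value on
comparable `x` and `y`. -/
theorem exists_forall_lt_of_not_connectedOn (hG : G.IsRelWeb) (hM : G.IsModalLab) {s : Finset ℕ}
    (hs : s ⊆ G.verts) (hne : s.Nonempty) (hdis : ¬ ConnectedOn s (G.NotJoins .seq)) :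
    ∃ u ∈ s, ∀ v ∈ s, v ≠ u → G.lt u v := by
  obtain ⟨u, hu, hmin⟩ := Finset.exists_rel_minimal hG.1.lt_irrefl (fun _ _ _ => hG.lt_trans) hne
  have key : ∀ x ∈ s, ∀ y ∈ s, G.lt x y → ((x = u ∨ G.lt u x) ↔ (y = u ∨ G.lt u y)) := by
    intro x hx y hy hxy
    refine ⟨?_, ?_⟩
    · rintro (rfl | hux)
      exacts [.inr hxy, .inr (hG.lt_trans hux hxy)]
    · rintro (rfl | huy)
      · exact absurd hxy (hmin x hx)
      by_cases hxu : x = u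
      · exact .inl hxu
      exact (hM.2 u x y (hs hu) (hs hx) (hs hy) huy hxy (Ne.symm hxu)).elim .inr
        fun h => absurd h (hmin x hx)
  refine ⟨u, hu, fun v hv hvu => ?_⟩
  have hconst := iff_of_not_connectedOn hdis (P := fun x => x = u ∨ G.lt u x)
    (fun x hx y hy hxy hn => (MGraph.joins_of_not_notJoins hxy hn).elim (key x hx y hy)
      fun h => (key y hy x hx h).symm) hu hv
  exact (hconst.1 (.inl rfl)).resolve_left hvu

theorem exists_iso_trans_restrict (hG : G.IsRelWeb) (hM : G.IsModalLab) (s : Finset ℕ)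
    (hs : s ⊆ G.verts) (hne : s.Nonempty) (hcl : G.LtClosed s) :
    ∃ F, Iso (G.restrict s) (trans F) := by
  induction s using Finset.strongInduction with
  | H s ih =>
  obtain ⟨v, rfl⟩ | hs2 := hne.exists_eq_singleton_or_nontrivial
  · exact exists_iso_trans_restrict_singleton hG.1 hM (hs (Finset.mem_singleton_self v)) hcl
  obtain ⟨k, hk⟩ := hG.exists_not_connectedOn s hs (Finset.one_lt_card_iff_nontrivial.2 hs2)
  cases k
  case par =>
    obtain ⟨X, Y, hX, hY, hXne, hYne, hXY, rfl, hXcl, hYcl, hcross⟩ :=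
      exists_ltClosed_split hG hcl hk nofun
    obtain ⟨F₁, h₁⟩ := ih X hX (hX.subset.trans hs) hXne hXcl
    obtain ⟨F₂, h₂⟩ := ih Y hY (hY.subset.trans hs) hYne hYcl
    exact ⟨F₁.parr F₂, iso_gparr hXY hcross h₁ h₂⟩
  case tens =>
    obtain ⟨X, Y, hX, hY, hXne, hYne, hXY, rfl, hXcl, hYcl, hcross⟩ :=
      exists_ltClosed_split hG hcl hk nofun
    obtain ⟨F₁, h₁⟩ := ih X hX (hX.subset.trans hs) hXne hXcl
    obtain ⟨F₂, h₂⟩ := ih Y hY (hY.subset.trans hs) hYne hYcl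
    exact ⟨F₁.tens F₂, iso_gtens hG.1 hXY hcross h₁ h₂⟩
  case seq =>
    obtain ⟨u, hu, hlt⟩ := exists_forall_lt_of_not_connectedOn hG hM hs hne hk
    obtain ⟨p, hp, hpu⟩ := hs2.exists_ne u
    obtain ⟨F, hF⟩ := ih (s.erase u) (Finset.erase_ssubset hu)
      ((Finset.erase_subset u s).trans hs) hs2.erase_nonempty (hcl.erase_of_forall_lt hG hlt)
    obtain ⟨F', hF'⟩ := exists_trans_eq_gseq ((hM.1 u (hs hu)).1 ⟨p, hlt p hp hpu⟩) F
    exact ⟨F', hF' ▸ iso_restrict_gseq_erase hG hu hlt hF⟩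

end Decomposition

end LabGraph

/-- A labeled relation web is isomorphic to the translation of some
formula `F` if and only if it is modal. -/
theorem formula_iff_modal (G : LabGraph) (hG : G.IsWeb) :
    (∃ F : Formula, LabGraph.Iso G (LabGraph.trans F)) ↔ G.IsModalLab := by
  constructor
  · rintro ⟨F, hF⟩
    exact .of_iso (LabGraph.ltWithin_of_isMixed hG.1) (LabGraph.trans_ltWithin F)
      (LabGraph.trans_isModalLab F) hF
  · intro hM
    exact LabGraph.exists_iso_trans_restrict hG hM G.verts subset_rfl hG.2.1
      fun v _ w hw => (LabGraph.ltWithin_of_isMixed hG.1 v w hw).2
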